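/- arXiv:1901.09529 — 2 statements merged into one kernel-verified Lean document; each statement's English description precedes it below -/
import Mathlib

section
/- Let B ∈ ℝ and S ∈ (0,∞). Then there is a constant C(S,B) such that ∫_{∂B_R} s(x)^{-B} do_x ≤ C(S,B) · R^{2 − min{1,B}} · σ(R) for all R ∈ [S,∞), where σ(R) := 1 if B ≠ 1 and σ(R) := ln(1+R) if B = 1. -/
open MeasureTheory Metric Set
open scoped InnerProductSpace ENNReal NNReal Topology

noncomputable section

abbrev E3 : Type := EuclideanSpace ℝ (Fin 3)

/-- The `i`-th standard basis vector of `ℝ³`. -/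
def e3 (i : Fin 3) : E3 := EuclideanSpace.single i 1

/-- `s(y) = 1 + |y| - y₁`. -/
def sw (y : E3) : ℝ := 1 + ‖y‖ - y 0

/-- Build a vector of `ℝ³` from its coordinates. -/
def vec3 (f : Fin 3 → ℝ) : E3 := (WithLp.equiv 2 (Fin 3 → ℝ)).symm f

/-- Cross product on `ℝ³`. -/
def cross3 (a b : E3) : E3 :=
  vec3 ![a 1 * b 2 - a 2 * b 1, a 2 * b 0 - a 0 * b 2, a 0 * b 1 - a 1 * b 0]

/-- `ρ e₁`. -/
def om (ρ : ℝ) : E3 := vec3 ![ρ, 0, 0]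

/-- Divergence of a vector field (via classical derivatives). -/
def divv (u : E3 → E3) (x : E3) : ℝ := ∑ i, fderiv ℝ u x (e3 i) i

/-- Gradient of a scalar function, as a vector of `ℝ³`. -/
def grads (f : E3 → ℝ) (x : E3) : E3 := vec3 fun i => fderiv ℝ f x (e3 i)

/-- Laplacian of a vector field. -/
def lapv (u : E3 → E3) (x : E3) : E3 :=
  ∑ i, fderiv ℝ (fun y => fderiv ℝ u y (e3 i)) x (e3 i)

/-- Laplacian of a scalar function. -/
def lapS (f : E3 → ℝ) (x : E3) : ℝ :=
  ∑ i, fderiv ℝ (fun y => fderiv ℝ f y (e3 i)) x (e3 i)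

/-- `∇u · ∇w = ∑_{i,j} ∂_j u_i ∂_j w_i`. -/
def gdot (u w : E3 → E3) (x : E3) : ℝ :=
  ∑ j, ⟪fderiv ℝ u x (e3 j), fderiv ℝ w x (e3 j)⟫_ℝ

/-- The differential operator `L u = -Δu + τ ∂₁ u - (ρ e₁ × z)·∇u + ρ e₁ × u`. -/
def Lop (τ ρ : ℝ) (u : E3 → E3) (x : E3) : E3 :=
  - lapv u x + τ • fderiv ℝ u x (e3 0) - fderiv ℝ u x (cross3 (om ρ) x)
    + cross3 (om ρ) (u x)

/-- `f ∈ L^q(A)`. -/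
def MemLpOn {F : Type*} [NormedAddCommGroup F] (A : Set E3) (q : ℝ) (f : E3 → F) : Prop :=
  MemLp f (ENNReal.ofReal q) (volume.restrict A)

/-- `f ∈ L^q_loc(U)`. -/
def MemLpLocOn {F : Type*} [NormedAddCommGroup F] (U : Set E3) (q : ℝ) (f : E3 → F) : Prop :=
  ∀ K : Set E3, K ⊆ U → IsCompact K → MemLpOn K q f

/-- `u ∈ W^{1,q}_loc(U)³` (classical reading). -/
def MemW1LocOn (U : Set E3) (q : ℝ) (u : E3 → E3) : Prop :=
  DifferentiableOn ℝ u U ∧ MemLpLocOn U q u ∧ MemLpLocOn U q (fun x => fderiv ℝ u x)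

/-- `u ∈ W^{2,q}_loc(U)³` (classical reading). -/
def MemW2LocOn (U : Set E3) (q : ℝ) (u : E3 → E3) : Prop :=
  DifferentiableOn ℝ u U ∧ DifferentiableOn ℝ (fun x => fderiv ℝ u x) U ∧
  MemLpLocOn U q u ∧ MemLpLocOn U q (fun x => fderiv ℝ u x) ∧
  MemLpLocOn U q (fun x => fderiv ℝ (fderiv ℝ u) x)

/-- `f ∈ W^{1,q}_loc(U)` for scalar functions (classical reading). -/
def MemW1LocOnS (U : Set E3) (q : ℝ) (f : E3 → ℝ) : Prop :=
  DifferentiableOn ℝ f U ∧ MemLpLocOn U q f ∧ MemLpLocOn U q (fun x => fderiv ℝ f x)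

/-- Vector-valued test functions supported in `U`. -/
def TestV (U : Set E3) (φ : E3 → E3) : Prop :=
  ContDiff ℝ (⊤ : ℕ∞) φ ∧ HasCompactSupport φ ∧ tsupport φ ⊆ U

/-- Integrand of the weak formulation of the linearized problem. -/
def oseenIntegrand (τ ρ : ℝ) (F u φ : E3 → E3) (x : E3) : ℝ :=
  gdot u φ x + ⟪τ • fderiv ℝ u x (e3 0) - fderiv ℝ u x (cross3 (om ρ) x)
      + cross3 (om ρ) (u x) - F x, φ x⟫_ℝ

/-- Weak formulation (2.*) (divergence-free test functions). -/
def WeakOseen (D : Set E3) (τ ρ : ℝ) (F u : E3 → E3) : Prop :=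
  ∀ φ : E3 → E3, TestV (closure D)ᶜ φ → (∀ x, divv φ x = 0) →
    ∫ x in (closure D)ᶜ, oseenIntegrand τ ρ F u φ x = 0

/-- Weak formulation with pressure (2.**). -/
def WeakOseenP (D : Set E3) (τ ρ : ℝ) (F u : E3 → E3) (p : E3 → ℝ) : Prop :=
  ∀ φ : E3 → E3, TestV (closure D)ᶜ φ →
    ∫ x in (closure D)ᶜ, (oseenIntegrand τ ρ F u φ x - p x * divv φ x) = 0

/-- Weak formulation of the nonlinear (Navier-Stokes type) problem with pressure. -/
def WeakNSP (D : Set E3) (τ ρ : ℝ) (F u : E3 → E3) (p : E3 → ℝ) : Prop :=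
  ∀ φ : E3 → E3, TestV (closure D)ᶜ φ →
    ∫ x in (closure D)ᶜ,
      (oseenIntegrand τ ρ F u φ x + τ * ⟪fderiv ℝ u x (u x), φ x⟫_ℝ
        - p x * divv φ x) = 0

/-- The logarithmic factor `l_{A,B}`. -/
def lAB (A B : ℝ) (y : E3) : ℝ :=
  if A + min 1 B = 3 then max 1 (Real.log ‖y‖) else 1

/-- Surface measure on the sphere `∂B_R` of radius `R` centered at `0` in `ℝ³`. -/
def sphM (R : ℝ) : Measure E3 :=
  (ENNReal.ofReal (R ^ 2)) •
    Measure.map (fun x : sphere (0 : E3) 1 => R • (x : E3)) volume.toSphere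

/-- The truncated domain `D_R = B_R \ closure D`. -/
def DRs (D : Set E3) (R : ℝ) : Set E3 := ball (0 : E3) R \ closure D

/-- The bilinear form `a_R`. -/
def aR (D : Set E3) (τ R : ℝ) (u w : E3 → E3) : ℝ :=
  (∫ x in DRs D R, (gdot u w x + τ * ⟪fderiv ℝ u x (e3 0), w x⟫_ℝ)) +
  (τ / 2) * ∫ x, ⟪u x, w x⟫_ℝ * (1 - x 0 / R) ∂(sphM R)

/-- The bilinear form `δ_R`. -/
def dR (D : Set E3) (ρ R : ℝ) (u w : E3 → E3) : ℝ :=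
  ∫ x in DRs D R, ⟪- fderiv ℝ u x (cross3 (om ρ) x) + cross3 (om ρ) (u x), w x⟫_ℝ

/-- The bilinear form `β_R`. -/
def bR (D : Set E3) (R : ℝ) (w : E3 → E3) (σ : E3 → ℝ) : ℝ :=
  - ∫ x in DRs D R, divv w x * σ x

/-- The norm `|v|^{(R)}`. -/
def nrmR (D : Set E3) (τ R : ℝ) (v : E3 → E3) : ℝ :=
  Real.sqrt ((∫ x in DRs D R, gdot v v x) + (τ / 2) * ∫ x, ‖v x‖ ^ 2 ∂(sphM R))

/-- Membership in `H¹(D_R)³`. -/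
def memH1 (D : Set E3) (R : ℝ) (v : E3 → E3) : Prop :=
  DifferentiableOn ℝ v (DRs D R) ∧ MemLpOn (DRs D R) 2 v ∧
    MemLpOn (DRs D R) 2 (fun x => fderiv ℝ v x)

/-- Membership in `W_R = {v ∈ H¹(D_R)³ : v|∂D = 0}`. -/
def memWR (D : Set E3) (R : ℝ) (v : E3 → E3) : Prop :=
  memH1 D R v ∧ EqOn v 0 (frontier D)

/-- The artificial boundary operator `L_R(u,π)`. -/
def LRop (τ R : ℝ) (u : E3 → E3) (π : E3 → ℝ) (x : E3) : E3 :=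
  vec3 fun k => (∑ j, fderiv ℝ u x (e3 j) k * (x j / R)) - π x * (x k / R)
    + (τ / 2) * (1 - x 0 / R) * u x k

/-- `D` is an open bounded set with `C²` boundary. -/
def IsC2Bounded (D : Set E3) : Prop :=
  IsOpen D ∧ Bornology.IsBounded D ∧
  ∀ x ∈ frontier D, ∃ (U : Set E3) (f : E3 → ℝ), IsOpen U ∧ x ∈ U ∧ ContDiff ℝ 2 f ∧
    (∀ y ∈ U, fderiv ℝ f y ≠ 0) ∧ U ∩ D = U ∩ {y | f y < 0} ∧
    U ∩ frontier D = U ∩ {y | f y = 0}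

/-- `Eb` is a divergence-free extension of the boundary data `b` with square-integrable
gradient (the properties of the extension operator `𝔈`). -/
def IsExtension (D : Set E3) (b Eb : E3 → E3) : Prop :=
  DifferentiableOn ℝ Eb (closure D)ᶜ ∧ MemLpLocOn (closure D)ᶜ 1 Eb ∧
  MemLpOn (closure D)ᶜ 2 (fun x => fderiv ℝ Eb x) ∧
  EqOn Eb b (frontier D) ∧ ∀ x ∈ (closure D)ᶜ, divv Eb x = 0

/-- `(V, P)` solves the truncated variational problem (3.2), (3.3) for data `(R, F, b)`,
where `Eb = 𝔈(b)`. -/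
def SolvesTrunc (D : Set E3) (τ ρ R : ℝ) (F Eb : E3 → E3)
    (V : E3 → E3) (P : E3 → ℝ) : Prop :=
  memWR D R V ∧ MemLpOn (DRs D R) 2 P ∧
  (∀ g : E3 → E3, memWR D R g →
    aR D τ R V g + dR D ρ R V g + bR D R g P =
      (∫ x in DRs D R, ⟪F x, g x⟫_ℝ) - aR D τ R Eb g - dR D ρ R Eb g) ∧
  (∀ σ : E3 → ℝ, MemLpOn (DRs D R) 2 σ → bR D R V σ = 0)

end

noncomputable section StmtAux

open MeasureTheory Metric Set Real

namespace StmtAux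

/-! ### Auxiliary definitions -/

def kk : ℝ → ℝ := (Set.Ioo (1:ℝ) 2).indicator (fun _ => 1)
def gg (R B : ℝ) (x : E3) : ℝ := (1 + R - R * (x 0 / ‖x‖)) ^ (-B)
def f1 : ℝ → ℝ := (Set.Ioo (-2:ℝ) 2).indicator (fun _ => 1)
def D2 (a B s t : ℝ) : ℝ :=
  (1 + a*(s^2+t^2)) ^ (-B) * (Set.Iio (4:ℝ)).indicator (fun _ => 1) (s^2+t^2)

/-! ### Basic facts -/

lemma norm_sq_eq (x : E3) : ‖x‖^2 = ∑ i, (x i)^2 := by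
  rw [EuclideanSpace.norm_eq, Real.sq_sqrt (by positivity)]
  simp [sq_abs]

lemma coord_le (x : E3) (i : Fin 3) : |x i| ≤ ‖x‖ := by
  rw [EuclideanSpace.norm_eq, ← Real.sqrt_sq_eq_abs]
  apply Real.sqrt_le_sqrt
  calc (x i)^2 = ‖x i‖^2 := by simp [sq_abs]
  _ ≤ ∑ j, ‖x j‖^2 := Finset.single_le_sum (f := fun j => ‖x j‖^2)
      (fun j _ => by positivity) (Finset.mem_univ i)

lemma norm_sq_three (x : E3) : ‖x‖^2 = (x 0)^2 + (x 1)^2 + (x 2)^2 := by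
  rw [norm_sq_eq, Fin.sum_univ_three]

lemma one_le_sw (x : E3) : (1:ℝ) ≤ sw x := by
  have := abs_le.1 (coord_le x 0)
  unfold sw; linarith [this.2]

lemma sw_cont : Continuous sw := by unfold sw; fun_prop

lemma cont_swB (B : ℝ) : Continuous (fun x : E3 => sw x ^ (-B)) := by
  apply Continuous.rpow_const sw_cont
  intro x; left; linarith [one_le_sw x]

lemma rpow_neg_anti {u v B : ℝ} (hu : 0 < u) (huv : u ≤ v) (hB : 0 ≤ B) :
    v^(-B) ≤ u^(-B) := by
  rw [Real.rpow_neg (le_trans hu.le huv), Real.rpow_neg hu.le]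
  exact inv_anti₀ (Real.rpow_pos_of_pos hu B) (Real.rpow_le_rpow hu.le huv hB)

/-! ### Transfer from `sphM` to the unit sphere -/

lemma sphM_transfer (R : ℝ) (hR : 0 < R) (B : ℝ) :
    ∫ x, sw x ^ (-B) ∂(sphM R) =
      R^2 * ∫ ω : sphere (0:E3) 1, sw (R • (ω : E3)) ^ (-B) ∂(volume.toSphere) := by
  rw [sphM, integral_smul_measure, integral_map (by fun_prop)
    (Continuous.aestronglyMeasurable (by exact (cont_swB B)))]
  rw [ENNReal.toReal_ofReal (by positivity)]
  rfl

lemma sw_smul (R : ℝ) (hR : 0 < R) (ω : sphere (0:E3) 1) :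
    sw (R • (ω : E3)) = 1 + R - R * (ω : E3) 0 := by
  have hω : ‖(ω : E3)‖ = 1 := by simpa using mem_sphere_zero_iff_norm.1 ω.2
  simp [sw, norm_smul, hω, abs_of_pos hR, PiLp.smul_apply, smul_eq_mul]

/-! ### Unit sphere to shell -/

lemma volumeIoiPow_annulus :
    ∫ r : Ioi (0:ℝ), kk r.1 ∂(Measure.volumeIoiPow 2) = 7/3 := by
  have hs : MeasurableSet ((Subtype.val) ⁻¹' (Ioo (1:ℝ) 2) : Set (Ioi (0:ℝ))) :=
    measurable_subtype_coe measurableSet_Ioo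
  have h1 : ∀ r : Ioi (0:ℝ), kk r.1 =
      Set.indicator ((Subtype.val) ⁻¹' (Ioo (1:ℝ) 2)) (fun _ => (1:ℝ)) r := by
    intro r
    simp [kk, Set.indicator, Set.mem_preimage]
  rw [funext h1, integral_indicator_const _ hs]
  have hmeas : Measure.volumeIoiPow 2 ((Subtype.val) ⁻¹' (Ioo (1:ℝ) 2)) =
      ENNReal.ofReal (7/3) := by
    rw [Measure.volumeIoiPow, withDensity_apply _ hs,
      setLIntegral_subtype measurableSet_Ioi _ (fun a : ℝ => ENNReal.ofReal (a ^ 2))]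
    have himg : (Subtype.val '' ((Subtype.val) ⁻¹' (Ioo (1:ℝ) 2) : Set (Ioi (0:ℝ)))) =
        Ioo (1:ℝ) 2 := by
      rw [Subtype.image_preimage_coe]
      exact inter_eq_right.2 (fun x hx => lt_trans one_pos hx.1)
    rw [himg, Measure.restrict_congr_set Ioo_ae_eq_Ioc,
      ← ofReal_integral_eq_lintegral_ofReal (intervalIntegral.intervalIntegrable_pow 2).1
        (by filter_upwards [ae_restrict_mem measurableSet_Ioc] with y hy
            exact pow_nonneg (le_trans one_pos.le hy.1.le) _),
      ← intervalIntegral.integral_of_le (by norm_num : (1:ℝ) ≤ 2)]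
    rw [integral_pow]
    norm_num
  rw [measureReal_def, hmeas, ENNReal.toReal_ofReal (by norm_num)]
  simp

lemma gg_scale (R B : ℝ) (x : E3) (hx : x ≠ 0) :
    gg R B (‖x‖⁻¹ • x) = gg R B x := by
  have hn : ‖x‖ ≠ 0 := norm_ne_zero_iff.2 hx
  have h0 : (0:ℝ) < ‖x‖ := norm_pos_iff.2 hx
  unfold gg
  congr 2
  rw [norm_smul, norm_inv, norm_norm, inv_mul_cancel₀ hn]
  simp [PiLp.smul_apply, smul_eq_mul]
  field_simp
  simp

lemma sphere_to_shell (R B : ℝ) :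
    (∫ ω : sphere (0:E3) 1, gg R B (ω : E3) ∂(volume.toSphere)) * (7/3) =
    ∫ x : E3, gg R B x * kk ‖x‖ ∂volume := by
  have hdim : Module.finrank ℝ E3 = 3 := finrank_euclideanSpace_fin
  have key := (volume : Measure E3).measurePreserving_homeomorphUnitSphereProd.integral_comp
    (Homeomorph.measurableEmbedding _)
    (fun p : sphere (0:E3) 1 × Ioi (0:ℝ) => gg R B (p.1 : E3) * kk p.2.1)
  have hcomp : ∀ x : ({(0:E3)}ᶜ : Set E3),
      gg R B ((homeomorphUnitSphereProd E3 x).1 : E3) * kk ((homeomorphUnitSphereProd E3 x).2 : ℝ)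
      = gg R B x.1 * kk ‖x.1‖ := by
    intro x
    rw [homeomorphUnitSphereProd_apply_fst_coe, homeomorphUnitSphereProd_apply_snd_coe,
      gg_scale R B x.1 x.2]
  rw [funext hcomp] at key
  have hsub : ∫ x : ({(0:E3)}ᶜ : Set E3), gg R B x.1 * kk ‖x.1‖ ∂(volume.comap Subtype.val)
      = ∫ x : E3, gg R B x * kk ‖x‖ ∂volume := by
    rw [integral_subtype_comap (measurableSet_singleton (0:E3)).compl
      (fun x => gg R B x * kk ‖x‖), restrict_compl_singleton]
  rw [← hsub, key]
  have hprod : ∫ p : sphere (0:E3) 1 × Ioi (0:ℝ), gg R B (p.1 : E3) * kk p.2.1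
        ∂((volume : Measure E3).toSphere.prod (Measure.volumeIoiPow (Module.finrank ℝ E3 - 1)))
      = (∫ ω : sphere (0:E3) 1, gg R B (ω : E3) ∂(volume.toSphere)) *
        (∫ r : Ioi (0:ℝ), kk r.1 ∂(Measure.volumeIoiPow (Module.finrank ℝ E3 - 1))) :=
    integral_prod_mul (f := fun ω : sphere (0:E3) 1 => gg R B (ω : E3))
      (g := fun r : Ioi (0:ℝ) => kk r.1)
  rw [hprod]
  have : ∫ r : Ioi (0:ℝ), kk r.1 ∂(Measure.volumeIoiPow (Module.finrank ℝ E3 - 1))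
      = 7/3 := by rw [hdim]; exact volumeIoiPow_annulus
  rw [this]

/-! ### Comparison on the shell -/

lemma pointwise_bound (R B : ℝ) (hR : 0 < R) (hB : 0 < B) (x : E3) :
    gg R B x * kk ‖x‖ ≤ f1 (x 0) * D2 (R/8) B (x 1) (x 2) := by
  by_cases hm : ‖x‖ ∈ Ioo (1:ℝ) 2
  · have hn1 : (1:ℝ) < ‖x‖ := hm.1
    have hn2 : ‖x‖ < 2 := hm.2
    have hn0 : (0:ℝ) < ‖x‖ := lt_trans one_pos hn1
    have ht := abs_le.1 (coord_le x 0)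
    have hq : (x 1)^2 + (x 2)^2 = ‖x‖^2 - (x 0)^2 := by
      have := norm_sq_three x; linarith
    have hkk : kk ‖x‖ = 1 := indicator_of_mem hm _
    have hf1 : f1 (x 0) = 1 := by
      apply indicator_of_mem _ _
      constructor <;> nlinarith [ht.1, ht.2]
    have hD2ind : (Set.Iio (4:ℝ)).indicator (fun _ => (1:ℝ)) ((x 1)^2+(x 2)^2) = 1 := by
      apply indicator_of_mem _ _
      show (x 1)^2+(x 2)^2 < 4
      nlinarith [sq_nonneg (x 0)]
    rw [hkk, hf1, D2, hD2ind, mul_one, mul_one, one_mul]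
    apply rpow_neg_anti (by positivity) _ hB.le
    have key : (1 + R/8*((x 1)^2+(x 2)^2)) * ‖x‖ ≤ (1 + R - R * (x 0 / ‖x‖)) * ‖x‖ := by
      have hx0 : R * (x 0 / ‖x‖) * ‖x‖ = R * x 0 := by field_simp
      have hq4 : ((x 1)^2+(x 2)^2) ≤ 4 * (‖x‖ - x 0) := by nlinarith [ht.2]
      have h1 : 0 ≤ ‖x‖ - x 0 := by linarith [ht.2]
      have h2 : ((x 1)^2+(x 2)^2)*‖x‖ ≤ 8*(‖x‖ - x 0) := by
        nlinarith [mul_le_mul_of_nonneg_right hq4 hn0.le]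
      have h3 : (R/8)*(((x 1)^2+(x 2)^2)*‖x‖) ≤ (R/8)*(8*(‖x‖-x 0)) :=
        mul_le_mul_of_nonneg_left h2 (by positivity)
      nlinarith [h3, hx0]
    exact le_of_mul_le_mul_right key hn0
  · rw [kk, indicator_of_notMem hm, mul_zero]
    apply mul_nonneg
    · exact indicator_nonneg (fun _ _ => zero_le_one) _
    · apply mul_nonneg (Real.rpow_nonneg (by positivity) _)
      exact indicator_nonneg (fun _ _ => zero_le_one) _

lemma gg_nonneg (R B : ℝ) (hR : 0 ≤ R) (x : E3) : 0 ≤ gg R B x := by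
  apply Real.rpow_nonneg
  rcases eq_or_ne x 0 with h | h
  · subst h
    simp
    linarith
  · have h0 : 0 < ‖x‖ := norm_pos_iff.2 h
    have ht := (abs_le.1 (coord_le x 0)).2
    have hdiv : x 0 / ‖x‖ ≤ 1 := (div_le_one h0).2 ht
    nlinarith [mul_nonneg hR (sub_nonneg.2 hdiv)]

lemma integrable_H (a B : ℝ) (ha : 0 ≤ a) (hB : 0 ≤ B) :
    Integrable (fun x : E3 => f1 (x 0) * D2 a B (x 1) (x 2)) := by
  have hmeas : AEStronglyMeasurable (fun x : E3 => f1 (x 0) * D2 a B (x 1) (x 2)) volume := by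
    apply AEStronglyMeasurable.mul
    · exact ((measurable_const.indicator (measurableSet_Ioo : MeasurableSet (Ioo (-2:ℝ) 2))).comp
        (by fun_prop : Measurable fun x : E3 => x 0)).aestronglyMeasurable
    · apply AEStronglyMeasurable.mul
      · apply Continuous.aestronglyMeasurable
        apply Continuous.rpow_const (by fun_prop)
        intro x; left; positivity
      · exact ((measurable_const.indicator (measurableSet_Iio : MeasurableSet (Iio (4:ℝ)))).comp
          (by fun_prop : Measurable fun x : E3 => (x 1)^2+(x 2)^2)).aestronglyMeasurable
  have hint : Integrable ((closedBall (0:E3) 3).indicator (fun _ => (1:ℝ))) := by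
    apply IntegrableOn.integrable_indicator _ measurableSet_closedBall
    exact integrableOn_const measure_closedBall_lt_top.ne
  apply hint.mono' hmeas
  filter_upwards with x
  have hnn : 0 ≤ f1 (x 0) * D2 a B (x 1) (x 2) := by
    apply mul_nonneg (indicator_nonneg (fun _ _ => zero_le_one) _)
    exact mul_nonneg (Real.rpow_nonneg (by positivity) _)
      (indicator_nonneg (fun _ _ => zero_le_one) _)
  rw [Real.norm_of_nonneg hnn]
  by_cases hx : x ∈ closedBall (0:E3) 3
  · rw [indicator_of_mem hx]
    have hle1 : ∀ (s : Set ℝ) (t : ℝ), s.indicator (fun _ => (1:ℝ)) t ≤ 1 := by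
      intro s t
      by_cases h : t ∈ s
      · rw [indicator_of_mem h]
      · rw [indicator_of_notMem h]; norm_num
    have h1 : f1 (x 0) ≤ 1 := hle1 _ _
    have h2 : (1 + a*((x 1)^2+(x 2)^2)) ^ (-B) ≤ 1 :=
      Real.rpow_le_one_of_one_le_of_nonpos (by nlinarith [sq_nonneg (x 1), sq_nonneg (x 2)])
        (by linarith)
    have h3 : D2 a B (x 1) (x 2) ≤ 1 := by
      rw [D2]
      exact mul_le_one₀ h2 (indicator_nonneg (fun _ _ => zero_le_one) _) (hle1 _ _)
    calc f1 (x 0) * D2 a B (x 1) (x 2) ≤ 1 * 1 := by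
          apply mul_le_mul h1 h3 _ zero_le_one
          exact mul_nonneg (Real.rpow_nonneg (by positivity) _)
            (indicator_nonneg (fun _ _ => zero_le_one) _)
    _ = 1 := by norm_num
  · rw [indicator_of_notMem hx]
    have hx3 : 3 < ‖x‖ := by
      simpa [mem_closedBall, dist_zero_right, not_le] using hx
    by_cases h0 : x 0 ∈ Ioo (-2:ℝ) 2
    · by_cases h12 : (x 1)^2+(x 2)^2 ∈ Iio (4:ℝ)
      · exfalso
        have := norm_sq_three x
        have h00 := abs_lt.1 (show |x 0| < 2 from abs_lt.2 ⟨h0.1, h0.2⟩)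
        nlinarith [h12.out, h0.1, h0.2]
      · rw [D2, indicator_of_notMem h12, mul_zero, mul_zero]
    · rw [f1, indicator_of_notMem h0, zero_mul]

/-! ### Fubini and polar coordinates -/

lemma fubini3 (a B : ℝ) :
    ∫ x : E3, f1 (x 0) * D2 a B (x 1) (x 2) =
      4 * ∫ y : ℝ × ℝ, D2 a B y.1 y.2 := by
  have h1 := (EuclideanSpace.volume_preserving_symm_measurableEquiv_toLp (Fin 3)).integral_comp
    (MeasurableEquiv.measurableEmbedding _)
    (fun y : Fin 3 → ℝ => f1 (y 0) * D2 a B (y 1) (y 2))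
  rw [show (fun x : E3 => f1 (x 0) * D2 a B (x 1) (x 2))
      = (fun x : E3 => f1 (((MeasurableEquiv.toLp 2 (Fin 3 → ℝ)).symm x) 0) *
        D2 a B (((MeasurableEquiv.toLp 2 (Fin 3 → ℝ)).symm x) 1)
          (((MeasurableEquiv.toLp 2 (Fin 3 → ℝ)).symm x) 2)) from rfl, h1]
  have h2 := (volume_preserving_piFinSuccAbove (fun _ : Fin 3 => ℝ) 0).integral_comp
    (MeasurableEquiv.measurableEmbedding _)
    (fun p : ℝ × (Fin 2 → ℝ) => f1 p.1 * D2 a B (p.2 0) (p.2 1))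
  have e2 : ∀ y : Fin 3 → ℝ, (MeasurableEquiv.piFinSuccAbove (fun _ : Fin 3 => ℝ) 0) y
      = (y 0, fun j => y (Fin.succAbove 0 j)) := fun y => rfl
  have e2' : ∀ y : Fin 3 → ℝ,
      f1 (y 0) * D2 a B (y 1) (y 2)
      = (fun p : ℝ × (Fin 2 → ℝ) => f1 p.1 * D2 a B (p.2 0) (p.2 1))
          ((MeasurableEquiv.piFinSuccAbove (fun _ : Fin 3 => ℝ) 0) y) := by
    intro y; rw [e2]; norm_num [Fin.succAbove]
  rw [funext e2', h2]
  have h3 : ∫ p : ℝ × (Fin 2 → ℝ), f1 p.1 * D2 a B (p.2 0) (p.2 1)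
      = (∫ t : ℝ, f1 t) * ∫ z : Fin 2 → ℝ, D2 a B (z 0) (z 1) := by
    rw [Measure.volume_eq_prod]
    exact integral_prod_mul (f := f1) (g := fun z : Fin 2 → ℝ => D2 a B (z 0) (z 1))
  rw [h3]
  have h4 := (volume_preserving_finTwoArrow ℝ).integral_comp
    (MeasurableEquiv.measurableEmbedding _)
    (fun y : ℝ × ℝ => D2 a B y.1 y.2)
  have e4 : ∀ z : Fin 2 → ℝ, D2 a B (z 0) (z 1)
      = (fun y : ℝ × ℝ => D2 a B y.1 y.2) (MeasurableEquiv.finTwoArrow z) := fun z => rfl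
  rw [funext e4, h4]
  have h5 : ∫ t : ℝ, f1 t = 4 := by
    rw [f1, integral_indicator_const _ measurableSet_Ioo, measureReal_def, Real.volume_Ioo,
      ENNReal.toReal_ofReal (by norm_num)]
    norm_num
  rw [h5]

lemma polar2 (a B : ℝ) :
    ∫ y : ℝ × ℝ, D2 a B y.1 y.2 =
      (2*π) * ∫ r in (0:ℝ)..2, r * (1 + a*r^2) ^ (-B) := by
  rw [← integral_comp_polarCoord_symm (fun y : ℝ × ℝ => D2 a B y.1 y.2)]
  have hsymm : ∀ p : ℝ × ℝ, p.1 • D2 a B (polarCoord.symm p).1 (polarCoord.symm p).2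
      = (p.1 * (1 + a*p.1^2) ^ (-B)) *
        (Set.Iio (4:ℝ)).indicator (fun _ => 1) (p.1^2) := by
    intro p
    have hsq : (polarCoord.symm p).1^2 + (polarCoord.symm p).2^2 = p.1^2 := by
      show (p.1 * Real.cos p.2)^2 + (p.1 * Real.sin p.2)^2 = p.1^2
      rw [mul_pow, mul_pow, ← mul_add, Real.cos_sq_add_sin_sq, mul_one]
    rw [D2, hsq, smul_eq_mul]; ring
  rw [funext hsymm, polarCoord_target, Measure.volume_eq_prod, ← Measure.prod_restrict]
  rw [show (fun p : ℝ × ℝ => p.1 * (1 + a*p.1^2) ^ (-B) *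
      (Set.Iio (4:ℝ)).indicator (fun _ => 1) (p.1^2))
    = (fun p : ℝ × ℝ => (fun r : ℝ => r * (1 + a*r^2) ^ (-B) *
      (Set.Iio (4:ℝ)).indicator (fun _ => 1) (r^2)) p.1 * (fun _ : ℝ => (1:ℝ)) p.2) from
      funext (fun p => by simp), integral_prod_mul (f := fun r : ℝ => r * (1 + a*r^2) ^ (-B) *
      (Set.Iio (4:ℝ)).indicator (fun _ => 1) (r^2)) (g := fun _ : ℝ => (1:ℝ))]
  have hπ : ∫ _ : ℝ in Ioo (-π) π, (1:ℝ) = 2*π := by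
    simp [Real.volume_Ioo, ENNReal.toReal_ofReal (by positivity : (0:ℝ) ≤ π + π)]
    ring
    exact max_eq_left (by positivity)
  rw [hπ]
  have hind : ∀ r ∈ Ioi (0:ℝ), r * (1 + a*r^2) ^ (-B) *
      (Set.Iio (4:ℝ)).indicator (fun _ => 1) (r^2)
      = (Set.Ioo (0:ℝ) 2).indicator (fun r => r * (1 + a*r^2) ^ (-B)) r := by
    intro r hr
    rw [mem_Ioi] at hr
    by_cases h : r < 2
    · have h4 : r^2 < 4 := by nlinarith
      rw [Set.indicator_of_mem (show r^2 ∈ Iio (4:ℝ) from h4),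
        Set.indicator_of_mem (show r ∈ Ioo (0:ℝ) 2 from ⟨hr, h⟩)]
      ring
    · have h4 : ¬ (r^2 < 4) := by push_neg at h ⊢; nlinarith
      rw [Set.indicator_of_notMem (show r^2 ∉ Iio (4:ℝ) from h4),
        Set.indicator_of_notMem (show r ∉ Ioo (0:ℝ) 2 from fun hc => h hc.2)]
      ring
  rw [setIntegral_congr_fun measurableSet_Ioi hind, integral_indicator measurableSet_Ioo,
    Measure.restrict_restrict measurableSet_Ioo,
    show Ioo (0:ℝ) 2 ∩ Ioi 0 = Ioo 0 2 from inter_eq_left.2 (fun x hx => hx.1),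
    Measure.restrict_congr_set Ioo_ae_eq_Ioc,
    ← intervalIntegral.integral_of_le (by norm_num : (0:ℝ) ≤ 2)]
  ring

/-! ### The 1D radial integrals -/

lemma cont_integrand (a B : ℝ) (ha : 0 ≤ a) :
    Continuous (fun r : ℝ => r * (1+a*r^2)^(-B)) := by
  apply continuous_id'.mul
  apply Continuous.rpow_const (by fun_prop)
  intro r; left; positivity

lemma inner_deriv (a r : ℝ) : HasDerivAt (fun r : ℝ => 1+a*r^2) (2*a*r) r := by
  have h := ((hasDerivAt_pow 2 r).const_mul a).const_add 1
  simpa [mul_comm, mul_assoc, mul_left_comm] using h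

lemma oneD_ne (a B : ℝ) (ha : 0 < a) (hB1 : B ≠ 1) :
    ∫ r in (0:ℝ)..2, r * (1+a*r^2)^(-B)
      = ((1+4*a)^(1-B) - 1)/(2*a*(1-B)) := by
  have key : ∀ r ∈ uIcc (0:ℝ) 2,
      HasDerivAt (fun r => (1+a*r^2)^(1-B) / (2*a*(1-B))) (r * (1+a*r^2)^(-B)) r := by
    intro r _
    have hpos : (0:ℝ) < 1+a*r^2 := by positivity
    have h1 : HasDerivAt (fun r : ℝ => (1+a*r^2)^(1-B))
        ((1-B) * (1+a*r^2)^(1-B-1) * (2*a*r)) r :=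
      by have := (Real.hasDerivAt_rpow_const (p := 1-B) (Or.inl hpos.ne')).comp r (inner_deriv a r); exact this
    have h2 := h1.div_const (2*a*(1-B))
    refine h2.congr_deriv (Eq.symm ?_)
    rw [show (1-B-1) = -B by ring, eq_div_iff (by
      have : (1:ℝ)-B ≠ 0 := sub_ne_zero.2 (fun h => hB1 h.symm)
      positivity)]
    ring
  rw [intervalIntegral.integral_eq_sub_of_hasDerivAt key
    ((cont_integrand a B ha.le).intervalIntegrable 0 2)]
  norm_num
  rw [show (1+a*4)=(1+4*a) by ring]
  have h1B : (1:ℝ)-B ≠ 0 := sub_ne_zero.2 (fun h => hB1 h.symm)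
  field_simp

lemma oneD_one (a : ℝ) (ha : 0 < a) :
    ∫ r in (0:ℝ)..2, r * (1+a*r^2)^(-(1:ℝ))
      = Real.log (1+4*a)/(2*a) := by
  have key : ∀ r ∈ uIcc (0:ℝ) 2,
      HasDerivAt (fun r => Real.log (1+a*r^2) / (2*a)) (r * (1+a*r^2)^(-(1:ℝ))) r := by
    intro r _
    have hpos : (0:ℝ) < 1+a*r^2 := by positivity
    have h1 : HasDerivAt (fun r : ℝ => Real.log (1+a*r^2)) ((1+a*r^2)⁻¹ * (2*a*r)) r :=
      by have := (Real.hasDerivAt_log hpos.ne').comp r (inner_deriv a r); exact this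
    have h2 := h1.div_const (2*a)
    refine h2.congr_deriv (Eq.symm ?_)
    rw [Real.rpow_neg_one, eq_div_iff (by positivity)]
    field_simp
  rw [intervalIntegral.integral_eq_sub_of_hasDerivAt key
    ((cont_integrand a 1 ha.le).intervalIntegrable 0 2)]
  norm_num
  rw [show (1+a*4)=(1+4*a) by ring]

/-! ### Main estimate for `B > 0` -/

lemma main_pos (R B : ℝ) (hR : 0 < R) (hB : 0 < B) :
    ∫ x, sw x ^ (-B) ∂(sphM R) ≤
      (24*π/7) * R^2 * ∫ r in (0:ℝ)..2, r * (1+(R/8)*r^2)^(-B) := by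
  rw [sphM_transfer R hR B]
  have hsph : (fun ω : sphere (0:E3) 1 => sw (R • (ω : E3)) ^ (-B))
      = fun ω : sphere (0:E3) 1 => gg R B (ω : E3) := by
    funext ω
    have hω : ‖(ω : E3)‖ = 1 := by simpa using mem_sphere_zero_iff_norm.1 ω.2
    rw [sw_smul R hR ω, gg, hω, div_one]
  rw [hsph]
  have h1 : ∫ ω : sphere (0:E3) 1, gg R B (ω : E3) ∂(volume.toSphere)
      = (3/7) * ∫ x : E3, gg R B x * kk ‖x‖ := by
    have := sphere_to_shell R B; linarith
  rw [h1]
  have h2 : ∫ x : E3, gg R B x * kk ‖x‖ ≤ ∫ x : E3, f1 (x 0) * D2 (R/8) B (x 1) (x 2) := by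
    apply integral_mono_of_nonneg
    · filter_upwards with x
      exact mul_nonneg (gg_nonneg R B hR.le x) (indicator_nonneg (fun _ _ => zero_le_one) _)
    · exact integrable_H (R/8) B (by positivity) hB.le
    · filter_upwards with x
      exact pointwise_bound R B hR hB x
  calc R^2 * ((3/7) * ∫ x : E3, gg R B x * kk ‖x‖)
      ≤ R^2 * ((3/7) * ∫ x : E3, f1 (x 0) * D2 (R/8) B (x 1) (x 2)) := by
        apply mul_le_mul_of_nonneg_left (mul_le_mul_of_nonneg_left h2 (by norm_num))
          (by positivity)
  _ = (24*π/7) * R^2 * ∫ r in (0:ℝ)..2, r * (1+(R/8)*r^2)^(-B) := by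
        rw [fubini3, polar2]
        ring

end StmtAux

end StmtAux

/-- Lemma 1.3. For `B ∈ ℝ`, `S ∈ (0,∞)` there is `C(S,B)` with
`∫_{∂B_R} s(x)^{-B} do_x ≤ C(S,B) R^{2-min{1,B}} σ(R)` for `R ∈ [S,∞)`, where `σ(R) = 1`
if `B ≠ 1` and `σ(R) = ln(1+R)` if `B = 1`. -/
theorem stmt3 (B S : ℝ) (hS : 0 < S) :
    ∃ C : ℝ, 0 < C ∧ ∀ R : ℝ, S ≤ R →
      ∫ x, sw x ^ (-B) ∂(sphM R) ≤
        C * R ^ (2 - min 1 B) * (if B = 1 then Real.log (1 + R) else 1) := by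
  by_cases hB1 : B = 1
  · -- case B = 1
    subst hB1
    refine ⟨96*Real.pi/7 + 1, by positivity, fun R hRS => ?_⟩
    have hR0 : 0 < R := lt_of_lt_of_le hS hRS
    have hI := StmtAux.main_pos R 1 hR0 one_pos
    rw [StmtAux.oneD_one (R/8) (by positivity),
      show (1:ℝ)+4*(R/8) = 1+R/2 from by ring] at hI
    rw [if_pos rfl, min_self, show (2:ℝ)-1 = 1 from by norm_num, Real.rpow_one]
    have hlog : Real.log (1+R/2) ≤ Real.log (1+R) := by
      apply Real.log_le_log (by linarith) (by linarith)
    have hlognn : 0 ≤ Real.log (1+R/2) := Real.log_nonneg (by linarith)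
    calc ∫ x, sw x ^ (-(1:ℝ)) ∂(sphM R)
        ≤ (24*Real.pi/7) * R^2 * (Real.log (1+R/2)/(2*(R/8))) := hI
    _ = (96*Real.pi/7) * R * Real.log (1+R/2) := by field_simp; ring
    _ ≤ (96*Real.pi/7 + 1) * R * Real.log (1+R) := by
        apply mul_le_mul _ hlog hlognn (by positivity)
        apply mul_le_mul _ le_rfl hR0.le (by positivity)
        linarith [Real.pi_pos]
  · by_cases hBpos : 0 < B
    · by_cases hBgt : 1 < B
      · -- case B > 1
        have hB1' : 0 < B - 1 := sub_pos.2 hBgt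
        refine ⟨96*Real.pi/(7*(B-1)) + 1, by positivity, fun R hRS => ?_⟩
        have hR0 : 0 < R := lt_of_lt_of_le hS hRS
        have hI := StmtAux.main_pos R B hR0 hBpos
        rw [StmtAux.oneD_ne (R/8) B (by positivity) hB1,
          show (1:ℝ)+4*(R/8) = 1+R/2 from by ring] at hI
        rw [if_neg hB1, min_eq_left hBgt.le, show (2:ℝ)-1 = 1 from by norm_num,
          Real.rpow_one, mul_one]
        have hX1 : (1+R/2:ℝ)^(1-B) ≤ 1 :=
          Real.rpow_le_one_of_one_le_of_nonpos (by linarith) (by linarith)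
        have hX0 : (0:ℝ) < (1+R/2:ℝ)^(1-B) := Real.rpow_pos_of_pos (by linarith) _
        have hF : ((1+R/2:ℝ)^(1-B) - 1)/(2*(R/8)*(1-B)) ≤ 4/(R*(B-1)) := by
          have hden : 2*(R/8)*(1-B) ≠ 0 := by
            intro h
            rcases mul_eq_zero.1 h with h' | h'
            · rcases mul_eq_zero.1 h' with h'' | h'' <;> nlinarith
            · nlinarith
          have heq : ((1+R/2:ℝ)^(1-B) - 1)/(2*(R/8)*(1-B))
              = (1 - (1+R/2:ℝ)^(1-B))/((R/4)*(B-1)) := by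
            rw [div_eq_div_iff hden (by positivity)]
            ring
          rw [heq, show (4:ℝ)/(R*(B-1)) = 1/((R/4)*(B-1)) from by
            rw [div_eq_div_iff (by positivity) (by positivity)]; ring]
          exact (div_le_div_iff_of_pos_right (by positivity)).2 (by linarith [hX0])
        calc ∫ x, sw x ^ (-B) ∂(sphM R)
            ≤ (24*Real.pi/7) * R^2 * (((1+R/2:ℝ)^(1-B) - 1)/(2*(R/8)*(1-B))) := hI
        _ ≤ (24*Real.pi/7) * R^2 * (4/(R*(B-1))) := by
            apply mul_le_mul_of_nonneg_left hF (by positivity)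
        _ = (96*Real.pi/(7*(B-1))) * R := by field_simp; ring
        _ ≤ (96*Real.pi/(7*(B-1)) + 1) * R := by nlinarith [Real.pi_pos]
      · -- case 0 < B < 1
        have hBlt : B < 1 := lt_of_le_of_ne (not_lt.1 hBgt) hB1
        have h1B : 0 < 1 - B := by linarith
        set K : ℝ := 1/S + 1/2 with hK
        have hKpos : 0 < K := by positivity
        refine ⟨96*Real.pi*K^(1-B)/(7*(1-B)) + 1, by positivity, fun R hRS => ?_⟩
        have hR0 : 0 < R := lt_of_lt_of_le hS hRS
        have hI := StmtAux.main_pos R B hR0 hBpos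
        rw [StmtAux.oneD_ne (R/8) B (by positivity) hB1,
          show (1:ℝ)+4*(R/8) = 1+R/2 from by ring] at hI
        rw [if_neg hB1, min_eq_right hBlt.le, mul_one]
        have huK : (1+R/2:ℝ) ≤ K*R := by
          have : 1 ≤ R/S := (one_le_div hS).2 hRS
          have : 1 ≤ (1/S)*R := by rw [one_div, inv_mul_eq_div]; exact this
          nlinarith
        have hu : (1+R/2:ℝ)^(1-B) ≤ K^(1-B) * R^(1-B) := by
          rw [← Real.mul_rpow hKpos.le hR0.le]
          exact Real.rpow_le_rpow (by linarith) huK h1B.le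
        have hF : ((1+R/2:ℝ)^(1-B) - 1)/(2*(R/8)*(1-B))
            ≤ (K^(1-B) * R^(1-B))/((R/4)*(1-B)) := by
          rw [show 2*(R/8)*(1-B) = (R/4)*(1-B) from by ring]
          exact (div_le_div_iff_of_pos_right (by positivity)).2 (by linarith [hu])
        have hpow : R^2 * (K^(1-B) * R^(1-B))/((R/4)*(1-B))
            = (4*K^(1-B)/(1-B)) * R^(2-B) := by
          have h2 : R^2 * R^(1-B) = R^((2:ℝ)-B) * R := by
            rw [← Real.rpow_natCast R 2, ← Real.rpow_add hR0,
              show ((2:ℕ):ℝ)+(1-B) = (2-B)+1 from by push_cast; ring,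
              Real.rpow_add hR0, Real.rpow_one]
          field_simp
          exact mul_left_cancel₀ hR0.ne' (by linear_combination h2)
        calc ∫ x, sw x ^ (-B) ∂(sphM R)
            ≤ (24*Real.pi/7) * R^2 * (((1+R/2:ℝ)^(1-B) - 1)/(2*(R/8)*(1-B))) := hI
        _ ≤ (24*Real.pi/7) * R^2 * ((K^(1-B) * R^(1-B))/((R/4)*(1-B))) := by
            apply mul_le_mul_of_nonneg_left hF (by positivity)
        _ = (96*Real.pi*K^(1-B)/(7*(1-B))) * R^((2:ℝ)-B) := by
            rw [show (24*Real.pi/7) * R^2 * ((K^(1-B) * R^(1-B))/((R/4)*(1-B)))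
              = (24*Real.pi/7) * (R^2 * (K^(1-B) * R^(1-B))/((R/4)*(1-B))) from by ring, hpow]
            field_simp
            ring
        _ ≤ (96*Real.pi*K^(1-B)/(7*(1-B)) + 1) * R^((2:ℝ)-B) := by
            have := Real.rpow_pos_of_pos hR0 ((2:ℝ)-B)
            nlinarith
    · -- case B ≤ 0
      push_neg at hBpos
      set M : ℝ := ((volume : Measure E3).toSphere (Set.univ)).toReal with hM
      have hMnn : 0 ≤ M := ENNReal.toReal_nonneg
      have hQ : (0:ℝ) < (2+1/S)^(-B) := Real.rpow_pos_of_pos (by positivity) _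
      refine ⟨M*(2+1/S)^(-B) + 1,
        by positivity, fun R hRS => ?_⟩
      have hR0 : 0 < R := lt_of_lt_of_le hS hRS
      rw [if_neg hB1, min_eq_right (by linarith : B ≤ 1), mul_one,
        StmtAux.sphM_transfer R hR0 B]
      have hptw : ∀ ω : sphere (0:E3) 1,
          sw (R • (ω : E3)) ^ (-B) ≤ (2+1/S)^(-B) * R^(-B) := by
        intro ω
        have hω : ‖(ω : E3)‖ = 1 := by simpa using mem_sphere_zero_iff_norm.1 ω.2
        have hc := abs_le.1 (StmtAux.coord_le (ω : E3) 0)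
        rw [hω] at hc
        have hsw : sw (R • (ω : E3)) ≤ (2+1/S)*R := by
          rw [StmtAux.sw_smul R hR0 ω]
          have h1 : 1 ≤ (1/S)*R := by
            rw [one_div, inv_mul_eq_div]; exact (one_le_div hS).2 hRS
          nlinarith [hc.1]
        have h0 : (0:ℝ) ≤ sw (R • (ω : E3)) := by linarith [StmtAux.one_le_sw (R • (ω : E3))]
        calc sw (R • (ω : E3)) ^ (-B) ≤ ((2+1/S)*R)^(-B) :=
            Real.rpow_le_rpow h0 hsw (by linarith)
        _ = (2+1/S)^(-B) * R^(-B) := Real.mul_rpow (by positivity) hR0.le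
      have hint : ∫ ω : sphere (0:E3) 1, sw (R • (ω : E3)) ^ (-B) ∂(volume.toSphere)
          ≤ M * ((2+1/S)^(-B) * R^(-B)) := by
        have h := integral_mono_of_nonneg
          (μ := (volume : Measure E3).toSphere)
          (f := fun ω : sphere (0:E3) 1 => sw (R • (ω : E3)) ^ (-B))
          (g := fun _ : sphere (0:E3) 1 => (2+1/S)^(-B) * R^(-B))
          (by filter_upwards with ω
              exact Real.rpow_nonneg (by linarith [StmtAux.one_le_sw (R • (ω : E3))]) _)
          (integrable_const _)
          (by filter_upwards with ω; exact hptw ω)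
        simpa [integral_const, smul_eq_mul, hM, measureReal_def] using h
      have hpow2 : R^2 * R^(-B) = R^((2:ℝ)-B) := by
        rw [← Real.rpow_natCast R 2, ← Real.rpow_add hR0,
          show ((2:ℕ):ℝ) + -B = 2 - B from by push_cast; ring]
      calc R^2 * ∫ ω : sphere (0:E3) 1, sw (R • (ω : E3)) ^ (-B) ∂(volume.toSphere)
          ≤ R^2 * (M * ((2+1/S)^(-B) * R^(-B))) := by
            apply mul_le_mul_of_nonneg_left hint (by positivity)
      _ = (M*(2+1/S)^(-B)) * (R^2 * R^(-B)) := by ring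
      _ = (M*(2+1/S)^(-B)) * R^((2:ℝ)-B) := by rw [hpow2]
      _ ≤ (M*(2+1/S)^(-B) + 1) * R^((2:ℝ)-B) := by
            have := Real.rpow_pos_of_pos hR0 ((2:ℝ)-B)
            nlinarith
end

section
/- Let γ, S₁ ∈ (0,∞), A ∈ [2,∞), and B ∈ ℝ with A + min{1,B} ≥ 3. Let F : B_{S₁}^c → ℝ³ be measurable with |F(z)| ≤ γ |z|^{-A} s(z)^{-B} for z ∈ B_{S₁}^c. Then F ∈ L^q(B_{S₁}^c)³ for every q ∈ (1,∞). -/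
open MeasureTheory Metric Set
open scoped InnerProductSpace ENNReal NNReal Topology

-- test basic helper lemmas
lemma abs_coord_le (z : E3) (i : Fin 3) : |z i| ≤ ‖z‖ := by
  rw [EuclideanSpace.norm_eq, ← Real.sqrt_sq_eq_abs]
  apply Real.sqrt_le_sqrt
  have : z i ^ 2 = ‖z i‖ ^ 2 := by simp [Real.norm_eq_abs, sq_abs]
  rw [this]
  exact Finset.single_le_sum (f := fun j => ‖z j‖ ^ 2) (fun j _ => by positivity)
    (Finset.mem_univ i)

lemma norm_sq_eq3 (z : E3) : ‖z‖ ^ 2 = z 0 ^ 2 + (z 1 ^ 2 + z 2 ^ 2) := by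
  rw [EuclideanSpace.norm_eq, Real.sq_sqrt (by positivity)]
  simp [Fin.sum_univ_three, Real.norm_eq_abs, sq_abs]; ring

lemma intg1 (m : ℝ) (hm : 1 < m) : Integrable (fun t : ℝ => (1 + |t|) ^ (-m)) := by
  have h := integrable_one_add_norm (E := ℝ) (μ := volume) (r := m) (by simpa using hm)
  simpa [Real.norm_eq_abs] using h

lemma intg3 (m : ℝ) (hm : 1 < m) :
    Integrable (fun z : E3 => ((1 + |z 0|) * ((1 + |z 1|) * (1 + |z 2|))) ^ (-m)) := by
  have h1 := intg1 m hm
  have h3 : Integrable (fun x : Fin 3 → ℝ => ∏ i, (1 + |x i|) ^ (-m)) :=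
    Integrable.fintype_prod (f := fun _ t => (1 + |t|) ^ (-m)) fun _ => h1
  have h4 := ((EuclideanSpace.volume_preserving_symm_measurableEquiv_toLp (Fin 3)).integrable_comp_emb
    (MeasurableEquiv.measurableEmbedding _)).2 h3
  have h5 : (fun z : E3 => ((1 + |z 0|) * ((1 + |z 1|) * (1 + |z 2|))) ^ (-m)) =
      (fun x : Fin 3 → ℝ => ∏ i, (1 + |x i|) ^ (-m)) ∘
        (MeasurableEquiv.toLp 2 (Fin 3 → ℝ)).symm := by
    funext z
    show _ = ∏ i : Fin 3, (1 + |z i|) ^ (-m)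
    rw [Fin.prod_univ_three, Real.mul_rpow (by positivity) (by positivity),
      Real.mul_rpow (by positivity) (by positivity), mul_assoc]
  rw [h5]; exact h4


lemma one_le_sw19 (z : E3) : 1 ≤ sw z := by
  have h := abs_coord_le z 0
  have : z 0 ≤ ‖z‖ := (le_abs_self _).trans h
  simp only [sw]; linarith

lemma inv_le_K_inv {x y K : ℝ} (hx : 0 < x) (hy : 0 < y) (h : y ≤ K * x) :
    x⁻¹ ≤ K * y⁻¹ := by
  have hK : 0 < K := by
    rcases lt_or_ge 0 K with h'|h'
    · exact h'
    · exfalso; nlinarith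
  rw [show K * y⁻¹ = K / y from (div_eq_mul_inv K y).symm, le_div_iff₀ hy,
    inv_mul_eq_div, div_le_iff₀ hx]
  linarith

set_option maxHeartbeats 1000000

lemma ptw (P β : ℝ) (hβ0 : 0 ≤ β) (hβ1 : β ≤ 1) (hPβ : 3 < P + β) (z : E3)
    (hz : 1 ≤ ‖z‖) :
    ‖z‖ ^ (-P) * sw z ^ (-β) ≤
      (12 ^ (P/2) + 2 ^ β * 8 ^ ((P+β)/3)) *
        ((1 + |z 0|) * ((1 + |z 1|) * (1 + |z 2|))) ^ (-(min (P/2) ((P+β)/3))) := by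
  set r := ‖z‖ with hr
  set ζ := Real.sqrt (z 1 ^ 2 + z 2 ^ 2) with hζ
  set Pi := (1 + |z 0|) * ((1 + |z 1|) * (1 + |z 2|)) with hPi
  set m := min (P/2) ((P+β)/3) with hm
  have hr0 : (0:ℝ) < r := lt_of_lt_of_le one_pos hz
  have hζ0 : 0 ≤ ζ := Real.sqrt_nonneg _
  have hζsq : ζ ^ 2 = z 1 ^ 2 + z 2 ^ 2 := Real.sq_sqrt (by positivity)
  have hrsq : r ^ 2 = z 0 ^ 2 + ζ ^ 2 := by rw [hζsq]; exact norm_sq_eq3 z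
  have habs0 : |z 0| ≤ r := abs_coord_le z 0
  have habs1 : |z 1| ≤ ζ := by
    rw [hζ, ← Real.sqrt_sq_eq_abs]; exact Real.sqrt_le_sqrt (by nlinarith [sq_nonneg (z 2)])
  have habs2 : |z 2| ≤ ζ := by
    rw [hζ, ← Real.sqrt_sq_eq_abs]; exact Real.sqrt_le_sqrt (by nlinarith [sq_nonneg (z 1)])
  have hζr : ζ ≤ r := by nlinarith [sq_nonneg (z 0)]
  have hz0r : z 0 ≤ r := (le_abs_self _).trans habs0
  have hsw1 : 1 ≤ sw z := one_le_sw19 z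
  have hsw0 : 0 < sw z := lt_of_lt_of_le one_pos hsw1
  have hswb : ζ ^ 2 ≤ 2 * r * sw z := by
    have : sw z = 1 + r - z 0 := rfl
    nlinarith [sq_nonneg (r - z 0), abs_nonneg (z 0), neg_abs_le (z 0)]
  have hP2 : 2 < P := by linarith
  have hPu1 : (1:ℝ) ≤ Pi := by
    have a0 := abs_nonneg (z 0); have a1 := abs_nonneg (z 1); have a2 := abs_nonneg (z 2)
    nlinarith [mul_nonneg a1 a2]
  have hPu0 : (0:ℝ) < Pi := lt_of_lt_of_le one_pos hPu1
  have hprod12 : (1 + |z 1|) * (1 + |z 2|) ≤ (1 + ζ) ^ 2 := by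
    nlinarith [sq_nonneg (|z 1| - |z 2|), sq_abs (z 1), sq_abs (z 2)]
  have hmP : m ≤ P / 2 := min_le_left _ _
  have hmt : m ≤ (P + β) / 3 := min_le_right _ _
  have hPum0 : (0:ℝ) < Pi ^ (-m) := Real.rpow_pos_of_pos hPu0 _
  have hC2 : (0:ℝ) ≤ 2 ^ β * 8 ^ ((P+β)/3) := by positivity
  have hC1 : (0:ℝ) ≤ (12:ℝ) ^ (P/2) := by positivity
  rcases le_or_gt (ζ ^ 2) (2 * r) with hI | hII
  · -- Case I
    have h1 : 1 + |z 0| ≤ 2 * r := by linarith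
    have h2 : (1 + |z 1|) * (1 + |z 2|) ≤ 6 * r := by nlinarith
    have hPule : Pi ≤ 12 * r ^ 2 := by
      calc Pi ≤ (2 * r) * (6 * r) := by
            apply mul_le_mul h1 h2 (by positivity) (by positivity)
        _ = 12 * r ^ 2 := by ring
    have hkey : Pi ^ m ≤ 12 ^ (P/2) * r ^ P := by
      calc Pi ^ m ≤ Pi ^ (P/2) := Real.rpow_le_rpow_of_exponent_le hPu1 hmP
        _ ≤ (12 * r ^ 2) ^ (P/2) := Real.rpow_le_rpow hPu0.le hPule (by positivity)
        _ = 12 ^ (P/2) * (r ^ 2) ^ (P/2) := Real.mul_rpow (by norm_num) (by positivity)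
        _ = 12 ^ (P/2) * r ^ P := by
            rw [← Real.rpow_natCast r 2, ← Real.rpow_mul hr0.le]
            congr 1
            push_cast; ring
    have hswle : sw z ^ (-β) ≤ 1 :=
      Real.rpow_le_one_of_one_le_of_nonpos hsw1 (by linarith)
    calc r ^ (-P) * sw z ^ (-β) ≤ r ^ (-P) * 1 := by
          apply mul_le_mul_of_nonneg_left hswle (by positivity)
      _ = (r ^ P)⁻¹ := by rw [mul_one, Real.rpow_neg hr0.le]
      _ ≤ 12 ^ (P/2) * (Pi ^ m)⁻¹ :=
          inv_le_K_inv (Real.rpow_pos_of_pos hr0 _) (Real.rpow_pos_of_pos hPu0 _) hkey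
      _ = 12 ^ (P/2) * Pi ^ (-m) := by rw [Real.rpow_neg hPu0.le]
      _ ≤ (12 ^ (P/2) + 2 ^ β * 8 ^ ((P+β)/3)) * Pi ^ (-m) :=
          mul_le_mul_of_nonneg_right (by linarith) hPum0.le
  · -- Case II
    set t := (P + β) / 3 with ht
    have hζ2 : 2 < ζ := by nlinarith
    have hζp : 0 < ζ := by linarith
    have htβ : β ≤ t := by rw [ht]; nlinarith
    set X := r ^ (P - β) * (ζ ^ 2) ^ β with hX
    have hXpos : 0 < X := by positivity
    have hPule : Pi ≤ 8 * (r * ζ ^ 2) := by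
      have h1 : 1 + |z 0| ≤ 2 * r := by linarith
      have h2 : (1 + |z 1|) * (1 + |z 2|) ≤ 4 * ζ ^ 2 := by nlinarith
      calc Pi ≤ (2 * r) * (4 * ζ ^ 2) := by
            apply mul_le_mul h1 h2 (by positivity) (by positivity)
        _ = 8 * (r * ζ ^ 2) := by ring
    have hkey : Pi ^ m ≤ 8 ^ t * X := by
      have e1 : (8 * (r * ζ ^ 2)) ^ t = 8 ^ t * (r ^ t * (ζ ^ 2) ^ t) := by
        rw [Real.mul_rpow (by norm_num) (by positivity),
          Real.mul_rpow (by positivity) (by positivity)]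
      have e2 : (ζ ^ 2) ^ t = (ζ ^ 2) ^ β * (ζ ^ 2) ^ (t - β) := by
        rw [← Real.rpow_add (by positivity)]; ring_nf
      have e3 : (ζ ^ 2) ^ (t - β) ≤ (r ^ 2) ^ (t - β) :=
        Real.rpow_le_rpow (by positivity) (by nlinarith) (by linarith)
      have e4 : r ^ t * (r ^ 2) ^ (t - β) = r ^ (P - β) := by
        rw [← Real.rpow_natCast r 2, ← Real.rpow_mul hr0.le, ← Real.rpow_add hr0]
        congr 1
        push_cast; linarith [ht]
      calc Pi ^ m ≤ Pi ^ t := Real.rpow_le_rpow_of_exponent_le hPu1 hmt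
        _ ≤ (8 * (r * ζ ^ 2)) ^ t := Real.rpow_le_rpow hPu0.le hPule (by positivity)
        _ = 8 ^ t * (r ^ t * ((ζ ^ 2) ^ β * (ζ ^ 2) ^ (t - β))) := by rw [e1, ← e2]
        _ ≤ 8 ^ t * (r ^ t * ((ζ ^ 2) ^ β * (r ^ 2) ^ (t - β))) := by
            have : (0:ℝ) ≤ (ζ ^ 2) ^ β := by positivity
            gcongr
        _ = 8 ^ t * X := by rw [hX, show r ^ t * ((ζ ^ 2) ^ β * (r ^ 2) ^ (t - β)) =
              (r ^ t * (r ^ 2) ^ (t - β)) * (ζ ^ 2) ^ β by ring, e4]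
    have hLHSX : r ^ (-P) * sw z ^ (-β) ≤ 2 ^ β * X⁻¹ := by
      have hsw2 : sw z ^ (-β) ≤ (2 * r) ^ β * (ζ ^ 2) ^ (-β) := by
        have hu : ζ ^ 2 / (2 * r) ≤ sw z := by
          rw [div_le_iff₀ (by positivity)]; nlinarith
        have hup : 0 < ζ ^ 2 / (2 * r) := by positivity
        calc sw z ^ (-β) ≤ (ζ ^ 2 / (2 * r)) ^ (-β) :=
              Real.rpow_le_rpow_of_nonpos hup hu (by linarith)
          _ = (2 * r) ^ β * (ζ ^ 2) ^ (-β) := by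
              rw [Real.div_rpow (by positivity) (by positivity), div_eq_mul_inv,
                ← Real.rpow_neg (by positivity : (0:ℝ) ≤ 2 * r), neg_neg, mul_comm]
      calc r ^ (-P) * sw z ^ (-β) ≤ r ^ (-P) * ((2 * r) ^ β * (ζ ^ 2) ^ (-β)) := by
            apply mul_le_mul_of_nonneg_left hsw2 (by positivity)
        _ = 2 ^ β * (r ^ (-P) * r ^ β * (ζ ^ 2) ^ (-β)) := by
            rw [Real.mul_rpow (by norm_num) hr0.le]; ring
        _ = 2 ^ β * X⁻¹ := by
            rw [← Real.rpow_add hr0, hX, mul_inv, ← Real.rpow_neg hr0.le,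
              ← Real.rpow_neg (by positivity : (0:ℝ) ≤ ζ ^ 2)]
            congr 2
            ring
    have hXinv : X⁻¹ ≤ 8 ^ t * (Pi ^ m)⁻¹ :=
      inv_le_K_inv hXpos (Real.rpow_pos_of_pos hPu0 _) hkey
    calc r ^ (-P) * sw z ^ (-β) ≤ 2 ^ β * X⁻¹ := hLHSX
      _ ≤ 2 ^ β * (8 ^ t * (Pi ^ m)⁻¹) := by
          apply mul_le_mul_of_nonneg_left hXinv (by positivity)
      _ = 2 ^ β * 8 ^ t * Pi ^ (-m) := by rw [Real.rpow_neg hPu0.le]; ring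
      _ ≤ (12 ^ (P/2) + 2 ^ β * 8 ^ t) * Pi ^ (-m) :=
          mul_le_mul_of_nonneg_right (by linarith) hPum0.le

/-- integrability of `F`, from the proof of Corollary 2.1: a measurable
field satisfying `|F(z)| ≤ γ |z|^{-A} s(z)^{-B}` on `B_{S₁}ᶜ` with `A ≥ 2`,
`A + min{1,B} ≥ 3` belongs to `L^q(B_{S₁}ᶜ)³` for every `q ∈ (1,∞)`. -/
theorem stmt19 (γ S₁ A B : ℝ) (hγ : 0 < γ) (hS₁ : 0 < S₁)
    (hA : 2 ≤ A) (hAB : 3 ≤ A + min 1 B)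
    (F : E3 → E3) (hFm : Measurable F)
    (hFd : ∀ z ∈ (closure (ball (0 : E3) S₁))ᶜ, ‖F z‖ ≤ γ * ‖z‖ ^ (-A) * sw z ^ (-B)) :
    ∀ q : ℝ, 1 < q → MemLpOn (closure (ball (0 : E3) S₁))ᶜ q F := by
  intro q hq
  have hq0 : (0:ℝ) < q := by linarith
  set Uc := (closure (ball (0 : E3) S₁))ᶜ with hUcdef
  have hUm : MeasurableSet Uc := isClosed_closure.measurableSet.compl
  have hnorm : ∀ z ∈ Uc, S₁ ≤ ‖z‖ := by
    intro z hz
    rw [hUcdef, Set.mem_compl_iff, closure_ball (0:E3) (ne_of_gt hS₁), mem_closedBall,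
      dist_zero_right, not_le] at hz
    exact hz.le
  have hbase : ∀ z ∈ Uc, ‖F z‖ ^ q ≤ γ ^ q * (‖z‖ ^ (-(q*A)) * sw z ^ (-(q*B))) := by
    intro z hz
    have hswp : (0:ℝ) < sw z := lt_of_lt_of_le one_pos (one_le_sw19 z)
    calc ‖F z‖ ^ q ≤ (γ * ‖z‖ ^ (-A) * sw z ^ (-B)) ^ q :=
          Real.rpow_le_rpow (norm_nonneg _) (hFd z hz) hq0.le
      _ = γ ^ q * (‖z‖ ^ ((-A)*q) * sw z ^ ((-B)*q)) := by
          rw [Real.mul_rpow (by positivity) (by positivity),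
            Real.mul_rpow (by positivity) (by positivity),
            ← Real.rpow_mul (norm_nonneg z), ← Real.rpow_mul hswp.le, mul_assoc]
      _ = γ ^ q * (‖z‖ ^ (-(q*A)) * sw z ^ (-(q*B))) := by
          rw [show (-A)*q = -(q*A) by ring, show (-B)*q = -(q*B) by ring]
  obtain ⟨P, β, c, hβ0, hβ1, hPβ, hc0, hbd⟩ :
      ∃ P β c : ℝ, 0 ≤ β ∧ β ≤ 1 ∧ 3 < P + β ∧ 0 ≤ c ∧
        ∀ z ∈ Uc, 1 ≤ ‖z‖ → ‖F z‖ ^ q ≤ c * (‖z‖ ^ (-P) * sw z ^ (-β)) := by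
    rcases le_or_gt 0 B with hB | hB
    · refine ⟨q*A, min 1 (q * min 1 B), γ ^ q,
        le_min zero_le_one (mul_nonneg hq0.le (le_min zero_le_one hB)),
        min_le_left _ _, ?_, by positivity, ?_⟩
      · rcases le_or_gt (q * min 1 B) 1 with h'|h'
        · rw [min_eq_right h', show q * A + q * min 1 B = q * (A + min 1 B) by ring]
          nlinarith
        · rw [min_eq_left h'.le]; nlinarith
      · intro z hz _
        refine (hbase z hz).trans ?_
        have hsw1 := one_le_sw19 z
        have hmono : sw z ^ (-(q*B)) ≤ sw z ^ (-(min 1 (q * min 1 B))) := by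
          apply Real.rpow_le_rpow_of_exponent_le hsw1
          have h1 : min 1 (q * min 1 B) ≤ q * min 1 B := min_le_right _ _
          have h2 : q * min 1 B ≤ q * B := mul_le_mul_of_nonneg_left (min_le_right _ _) hq0.le
          linarith
        have h0 : (0:ℝ) ≤ ‖z‖ ^ (-(q*A)) := Real.rpow_nonneg (norm_nonneg _) _
        exact mul_le_mul_of_nonneg_left (mul_le_mul_of_nonneg_left hmono h0) (by positivity)
    · have hminB : min 1 B = B := min_eq_right (by linarith)
      refine ⟨q*(A+B), 0, γ ^ q * 3 ^ (-(q*B)), le_refl 0, zero_le_one, ?_, by positivity, ?_⟩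
      · rw [hminB] at hAB; nlinarith
      · intro z hz hz1
        have hr0 : (0:ℝ) < ‖z‖ := by linarith
        have hswp : (0:ℝ) < sw z := lt_of_lt_of_le one_pos (one_le_sw19 z)
        have hsw3 : sw z ≤ 3 * ‖z‖ := by
          have h0 := abs_coord_le z 0
          have h1 : sw z = 1 + ‖z‖ - z 0 := rfl
          have h2 := neg_abs_le (z 0)
          linarith
        have h2 : sw z ^ (-(q*B)) ≤ (3*‖z‖) ^ (-(q*B)) :=
          Real.rpow_le_rpow hswp.le hsw3 (by nlinarith)
        refine (hbase z hz).trans ?_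
        calc γ ^ q * (‖z‖ ^ (-(q*A)) * sw z ^ (-(q*B)))
            ≤ γ ^ q * (‖z‖ ^ (-(q*A)) * (3*‖z‖) ^ (-(q*B))) := by
              apply mul_le_mul_of_nonneg_left
                (mul_le_mul_of_nonneg_left h2 (Real.rpow_nonneg (norm_nonneg _) _))
                (by positivity)
          _ = γ ^ q * 3 ^ (-(q*B)) * (‖z‖ ^ (-(q*(A+B))) * sw z ^ (-(0:ℝ))) := by
              rw [Real.mul_rpow (by norm_num) hr0.le, neg_zero, Real.rpow_zero, mul_one,
                show ‖z‖ ^ (-(q*A)) * (3 ^ (-(q*B)) * ‖z‖ ^ (-(q*B)))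
                  = 3 ^ (-(q*B)) * (‖z‖ ^ (-(q*A)) * ‖z‖ ^ (-(q*B))) by ring,
                ← Real.rpow_add hr0, show -(q*A) + -(q*B) = -(q*(A+B)) by ring]
              ring
  set m := min (P/2) ((P+β)/3) with hmdef
  have hm1 : 1 < m := lt_min (by linarith) (by linarith)
  set C₂ := c * (12 ^ (P/2) + 2 ^ β * 8 ^ ((P+β)/3)) with hC₂def
  have htail : ∀ z ∈ Uc, 1 ≤ ‖z‖ →
      ‖F z‖ ^ q ≤ C₂ * ((1+|z 0|) * ((1+|z 1|)*(1+|z 2|))) ^ (-m) := by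
    intro z hz hz1
    refine (hbd z hz hz1).trans ?_
    have hp := ptw P β hβ0 hβ1 hPβ z hz1
    calc c * (‖z‖^(-P) * sw z^(-β))
        ≤ c * ((12 ^ (P/2) + 2 ^ β * 8 ^ ((P+β)/3)) *
            ((1+|z 0|) * ((1+|z 1|)*(1+|z 2|))) ^ (-m)) := mul_le_mul_of_nonneg_left hp hc0
      _ = C₂ * ((1+|z 0|) * ((1+|z 1|)*(1+|z 2|))) ^ (-m) := by rw [hC₂def]; ring
  have hqne : ENNReal.ofReal q ≠ 0 := by
    simp only [ne_eq, ENNReal.ofReal_eq_zero, not_le]; exact hq0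
  have hFsm : AEStronglyMeasurable F (volume.restrict Uc) := hFm.aestronglyMeasurable
  show MemLp F (ENNReal.ofReal q) (volume.restrict Uc)
  rw [← memLp_norm_rpow_iff (q := ENNReal.ofReal q) hFsm hqne ENNReal.ofReal_ne_top,
    ENNReal.toReal_ofReal hq0.le, ENNReal.div_self hqne ENNReal.ofReal_ne_top,
    memLp_one_iff_integrable]
  have hmeas : AEStronglyMeasurable (fun x => ‖F x‖ ^ q) (volume.restrict Uc) :=
    ((Real.continuous_rpow_const hq0.le).measurable.comp hFm.norm).aestronglyMeasurable
  have hA1 : IntegrableOn (fun x => ‖F x‖ ^ q) (Uc ∩ closedBall 0 1) := by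
    have hms : MeasurableSet (Uc ∩ closedBall 0 1) := hUm.inter measurableSet_closedBall
    apply Integrable.mono' (g := fun _ => (γ * S₁ ^ (-A) * max 1 (3 ^ (-B))) ^ q)
    · exact integrableOn_const
        (((measure_mono inter_subset_right).trans_lt measure_closedBall_lt_top).ne)
    · exact hmeas.mono_measure (Measure.restrict_mono inter_subset_left le_rfl)
    · refine (ae_restrict_mem hms).mono fun z hz => ?_
      obtain ⟨hzU, hzb⟩ := hz
      rw [Real.norm_eq_abs, abs_of_nonneg (Real.rpow_nonneg (norm_nonneg _) _)]
      apply Real.rpow_le_rpow (norm_nonneg _) _ hq0.le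
      refine (hFd z hzU).trans ?_
      have hzS : S₁ ≤ ‖z‖ := hnorm z hzU
      have hz1 : ‖z‖ ≤ 1 := by rwa [mem_closedBall, dist_zero_right] at hzb
      have h1 : ‖z‖ ^ (-A) ≤ S₁ ^ (-A) :=
        Real.rpow_le_rpow_of_nonpos hS₁ hzS (by linarith)
      have hswp : (0:ℝ) < sw z := lt_of_lt_of_le one_pos (one_le_sw19 z)
      have h2 : sw z ^ (-B) ≤ max 1 (3 ^ (-B)) := by
        rcases le_or_gt 0 B with hB|hB
        · exact le_trans
            (Real.rpow_le_one_of_one_le_of_nonpos (one_le_sw19 z) (by linarith))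
            (le_max_left _ _)
        · have hsw3 : sw z ≤ 3 := by
            have h0 := abs_coord_le z 0
            have hid : sw z = 1 + ‖z‖ - z 0 := rfl
            have hn := neg_abs_le (z 0)
            linarith
          exact le_trans (Real.rpow_le_rpow hswp.le hsw3 (by linarith)) (le_max_right _ _)
      calc γ * ‖z‖^(-A) * sw z^(-B) ≤ γ * S₁^(-A) * sw z^(-B) := by
            apply mul_le_mul_of_nonneg_right (mul_le_mul_of_nonneg_left h1 hγ.le) (by positivity)
        _ ≤ γ * S₁^(-A) * max 1 (3^(-B)) := mul_le_mul_of_nonneg_left h2 (by positivity)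
  have hB1 : IntegrableOn (fun x => ‖F x‖ ^ q) (Uc \ closedBall 0 1) := by
    have hms : MeasurableSet (Uc \ closedBall 0 1) := hUm.diff measurableSet_closedBall
    apply Integrable.mono' (g := fun z => C₂ * ((1+|z 0|) * ((1+|z 1|)*(1+|z 2|))) ^ (-m))
    · exact ((intg3 m hm1).const_mul C₂).integrableOn
    · exact hmeas.mono_measure (Measure.restrict_mono diff_subset le_rfl)
    · refine (ae_restrict_mem hms).mono fun z hz => ?_
      obtain ⟨hzU, hzb⟩ := hz
      have hz1 : 1 ≤ ‖z‖ := by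
        by_contra h
        push_neg at h
        exact hzb (by simpa [mem_closedBall, dist_zero_right] using h.le)
      rw [Real.norm_eq_abs, abs_of_nonneg (Real.rpow_nonneg (norm_nonneg _) _)]
      exact htail z hzU hz1
  have hsplit : Uc = (Uc ∩ closedBall 0 1) ∪ (Uc \ closedBall 0 1) :=
    (Set.inter_union_diff _ _).symm
  rw [hsplit]
  exact hA1.union hB1
end
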